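/- Fix integers j, k ≥ 1 with j·k > 1. For n ≥ 1 let N(n) be the number of binary strings of length n containing no run of more than j consecutive 1s and no run of more than k consecutive 0s. Then inf{σ ∈ ℝ : Σ_{n=1}^{∞} N(n)·e^{-n·σ} converges} = s*, where s* is the unique positive real solution of (Σ_{a=1}^{j} e^{-a·s})·(Σ_{b=1}^{k} e^{-b·s}) = 1. -/

import Mathlib

/-!
Split the admissible strings by their first letter `c` and strip the first run, of length `a`
between `1` and `j` or `k` according to `c`: the number `W_c(n)` of admissible strings of
length `n` starting with `c` satisfies `W_c(n) = ∑_a W_{!c}(n - a)`. With `x = e^{-s}` and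
`u_c(n) = W_c(n) xⁿ`, two such steps give `u_c(n) = ∑_{a,b} x^{a+b} u_c(n - a - b)`, and the
weights `x^{a+b}` sum to `1` precisely by the equation defining `s`. So each `u_c(n)` is an
average of earlier values and stays between the minimum and maximum of its initial values; hence
`N(n) e^{-ns}` is bounded above and away from `0`, and `∑ N(n) e^{-nσ}` converges exactly when
`σ > s`.
-/

open Finset

namespace List

variable {α : Type*}

theorem exists_eq_replicate_append_head?_ne (c : α) (l : List α) :
    ∃ a t, t.head? ≠ some c ∧ l = replicate a c ++ t := by
  induction l with
  | nil => exact ⟨0, [], by simp, rfl⟩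
  | cons x l ih =>
    by_cases hx : x = c
    · obtain ⟨a, t, ht, rfl⟩ := ih
      exact ⟨a + 1, t, ht, by rw [hx, replicate_succ, cons_append]⟩
    · exact ⟨0, x :: l, by simpa using hx, rfl⟩

variable {c : α} {a m : ℕ} {t : List α}

theorem eq_of_replicate_append_eq {a' : ℕ} {t' : List α} (ht : t.head? ≠ some c)
    (ht' : t'.head? ≠ some c) (h : replicate a c ++ t = replicate a' c ++ t') : a = a' := by
  induction a generalizing a' with
  | zero =>
    cases a' with
    | zero => rfl
    | succ a' =>
      rw [replicate_zero, nil_append, replicate_succ, cons_append] at h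
      simp [h] at ht
  | succ a ih =>
    cases a' with
    | zero =>
      rw [replicate_zero, nil_append, replicate_succ, cons_append] at h
      simp [← h] at ht'
    | succ a' => simpa using ih (by simpa [replicate_succ] using h)

theorem replicate_prefix_replicate_append_iff (ht : t.head? ≠ some c) :
    replicate m c <+: replicate a c ++ t ↔ m ≤ a := by
  refine ⟨fun h => ?_, fun h => ?_⟩
  · by_contra! ham
    have : replicate a c ++ [c] <+: replicate a c ++ t := by
      rw [← replicate_succ']
      exact (prefix_replicate_iff.2 ⟨by simpa using ham, by simp⟩).trans h
    obtain ⟨u, rfl⟩ := (prefix_append_right_inj _).1 this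
    simp at ht
  · exact (prefix_replicate_iff.2 ⟨by simpa using h, by simp⟩).trans (prefix_append _ _)

theorem replicate_infix_replicate_append_iff (ht : t.head? ≠ some c) :
    replicate m c <:+: replicate a c ++ t ↔ m ≤ a ∨ replicate m c <:+: t := by
  refine ⟨fun h => ?_, ?_⟩
  · induction a with
    | zero => exact .inr (by simpa using h)
    | succ a ih =>
      rw [replicate_succ, cons_append, infix_cons_iff, ← cons_append, ← replicate_succ,
        replicate_prefix_replicate_append_iff ht] at h
      rcases h with h | h
      · exact .inl h
      · exact (ih h).imp_left Nat.le_succ_of_le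
  · rintro (h | h)
    · exact ((replicate_prefix_replicate_append_iff ht).2 h).isInfix
    · exact h.trans (suffix_append _ _).isInfix

theorem IsInfix.of_replicate_append {u : List α} (hu : c ∉ u) (h : u <:+: replicate a c ++ t) :
    u <:+: t := by
  induction a with
  | zero => simpa using h
  | succ a ih =>
    rw [replicate_succ, cons_append, infix_cons_iff] at h
    rcases h with h | h
    · cases u with
      | nil => exact nil_infix
      | cons y u => exact absurd ((cons_prefix_cons.1 h).1 ▸ mem_cons_self) hu
    · exact ih h

end List

open List

def RunBounded (m : Bool → ℕ) (l : List Bool) : Prop :=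
  ∀ c, ¬ replicate (m c + 1) c <:+: l

theorem runBounded_replicate_append_iff {m : Bool → ℕ} {c : Bool} {a : ℕ} {t : List Bool}
    (ht : t.head? ≠ some c) :
    RunBounded m (replicate a c ++ t) ↔ a ≤ m c ∧ RunBounded m t := by
  have hother : replicate (m (!c) + 1) (!c) <:+: replicate a c ++ t ↔
      replicate (m (!c) + 1) (!c) <:+: t :=
    ⟨IsInfix.of_replicate_append (by simp), fun h => h.trans (suffix_append _ _).isInfix⟩
  rw [RunBounded, RunBounded, Bool.forall_bool' c, Bool.forall_bool' c,
    replicate_infix_replicate_append_iff ht, hother, not_or, Nat.not_le, Nat.lt_succ_iff, and_assoc]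

/-- Lists that are empty or start with `c`: admitting `[]` makes the first-run recurrence
`ncard_runBoundedFrom_of_ne_zero` hold also for a list consisting of a single run. -/
def runBoundedFrom (m : Bool → ℕ) (c : Bool) (n : ℕ) : Set (List Bool) :=
  {l | l.length = n ∧ RunBounded m l ∧ l.head? ≠ some (!c)}

section RunBoundedFrom

variable {m : Bool → ℕ} {c : Bool} {n : ℕ}

theorem runBoundedFrom_finite : (runBoundedFrom m c n).Finite :=
  (List.finite_length_eq Bool n).subset fun _ hl => hl.1

theorem runBoundedFrom_zero : runBoundedFrom m c 0 = {[]} := by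
  ext l
  simp only [runBoundedFrom, RunBounded, Set.mem_ofPred_eq, Set.mem_singleton_iff,
    length_eq_zero_iff]
  constructor
  · exact fun h => h.1
  · rintro rfl
    simp

theorem runBoundedFrom_eq_biUnion (hn : n ≠ 0) :
    runBoundedFrom m c n = ⋃ a ∈ Icc 1 (min (m c) n),
      (replicate a c ++ ·) '' runBoundedFrom m (!c) (n - a) := by
  ext l
  simp only [runBoundedFrom, Set.mem_iUnion, Set.mem_image, Set.mem_ofPred_eq, mem_Icc,
    Bool.not_not, exists_prop, le_min_iff]
  constructor
  · rintro ⟨hlen, hl, hhead⟩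
    obtain ⟨a, t, ht, rfl⟩ := exists_eq_replicate_append_head?_ne c l
    rw [runBounded_replicate_append_iff ht] at hl
    have ha : a ≠ 0 := by
      rintro rfl
      cases t with
      | nil => exact hn (by simpa using hlen.symm)
      | cons b t => cases b <;> cases c <;> simp_all
    simp only [length_append, length_replicate] at hlen
    exact ⟨a, ⟨by omega, hl.1, by omega⟩, t, ⟨by omega, hl.2, ht⟩, rfl⟩
  · rintro ⟨a, ⟨ha, ham, han⟩, t, ⟨hlen, ht, hhead⟩, rfl⟩
    refine ⟨by simp [hlen]; omega, (runBounded_replicate_append_iff hhead).2 ⟨ham, ht⟩, ?_⟩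
    obtain ⟨a, rfl⟩ := Nat.exists_eq_add_of_le' ha
    simp [replicate_succ]

theorem ncard_runBoundedFrom_of_ne_zero (hn : n ≠ 0) :
    (runBoundedFrom m c n).ncard =
      ∑ a ∈ Icc 1 (min (m c) n), (runBoundedFrom m (!c) (n - a)).ncard := by
  rw [runBoundedFrom_eq_biUnion hn, ← set_biUnion_coe, (Finset.finite_toSet _).ncard_biUnion,
    finsum_mem_coe_finset]
  · exact sum_congr rfl fun a _ => Set.ncard_image_of_injective _ (append_right_injective _)
  · exact fun a _ => runBoundedFrom_finite.image _
  · intro a _ b _ hab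
    refine Set.disjoint_left.2 ?_
    rintro _ ⟨t, ht, rfl⟩ ⟨t', ht', h⟩
    exact hab (eq_of_replicate_append_eq (by simpa using ht'.2.2) (by simpa using ht.2.2) h).symm

theorem ncard_runBoundedFrom_pos (hm : ∀ b, 1 ≤ m b) (c : Bool) (n : ℕ) :
    0 < (runBoundedFrom m c n).ncard := by
  induction n generalizing c with
  | zero => simp [runBoundedFrom_zero]
  | succ n ih =>
    rw [ncard_runBoundedFrom_of_ne_zero (by omega : n + 1 ≠ 0)]
    have h1 : 1 ∈ Icc 1 (min (m c) (n + 1)) := by simp [hm c]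
    exact (ih !c).trans_le <| single_le_sum
      (f := fun a => (runBoundedFrom m (!c) (n + 1 - a)).ncard) (fun _ _ => Nat.zero_le _) h1

end RunBoundedFrom

section Averaging

variable {ι : Type*} {s : Finset ι} {w : ι → ℝ} {d : ι → ℕ} {u : ℕ → ℝ} {n₀ : ℕ}

theorem le_of_averaging_recurrence (hw : ∀ i ∈ s, 0 ≤ w i) (hw1 : ∑ i ∈ s, w i = 1)
    (hd : ∀ i ∈ s, 1 ≤ d i) (hu : ∀ n, n₀ < n → u n = ∑ i ∈ s, w i * u (n - d i)) {B : ℝ}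
    (hB : ∀ n ≤ n₀, u n ≤ B) (n : ℕ) : u n ≤ B := by
  induction n using Nat.strong_induction_on with
  | _ n ih =>
    rcases le_or_gt n n₀ with hn | hn
    · exact hB n hn
    · calc u n = ∑ i ∈ s, w i * u (n - d i) := hu n hn
        _ ≤ ∑ i ∈ s, w i * B := sum_le_sum fun i hi =>
          mul_le_mul_of_nonneg_left (ih _ (by have := hd i hi; omega)) (hw i hi)
        _ = B := by rw [← sum_mul, hw1, one_mul]

theorem exists_bounds_of_averaging_recurrence (hw : ∀ i ∈ s, 0 ≤ w i)
    (hw1 : ∑ i ∈ s, w i = 1) (hd : ∀ i ∈ s, 1 ≤ d i)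
    (hu : ∀ n, n₀ < n → u n = ∑ i ∈ s, w i * u (n - d i)) (hpos : ∀ n, 0 < u n) :
    ∃ lo hi : ℝ, 0 < lo ∧ ∀ n, lo ≤ u n ∧ u n ≤ hi := by
  have hne : (Iic n₀).Nonempty := nonempty_Iic
  have hmem : ∀ n ≤ n₀, n ∈ Iic n₀ := fun n => mem_Iic.2
  refine ⟨(Iic n₀).inf' hne u, (Iic n₀).sup' hne u,
    (lt_inf'_iff _).2 fun n _ => hpos n, fun n => ⟨?_, ?_⟩⟩
  · have hneg : ∀ n, n₀ < n → -u n = ∑ i ∈ s, w i * -u (n - d i) := fun n hn => by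
      simp [hu n hn]
    exact neg_le_neg_iff.1 <| le_of_averaging_recurrence (u := fun n => -u n) hw hw1 hd hneg
      (fun n hn => neg_le_neg (inf'_le u (hmem n hn))) n
  · exact le_of_averaging_recurrence hw hw1 hd hu (fun n hn => le_sup' u (hmem n hn)) n

end Averaging

theorem summable_mul_pow_iff_of_bounds {b : ℕ → ℝ} {lo hi r : ℝ} (hlo : 0 < lo)
    (hb : ∀ n, lo ≤ b n ∧ b n ≤ hi) (hr : 0 ≤ r) :
    Summable (fun n => b n * r ^ n) ↔ r < 1 := by
  rw [← abs_of_nonneg hr, ← Real.norm_eq_abs, ← summable_geometric_iff_norm_lt_one,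
    Real.norm_eq_abs, abs_of_nonneg hr]
  constructor
  · intro h
    refine (h.div_const lo).of_nonneg_of_le (fun n => by positivity) fun n => ?_
    rw [le_div_iff₀ hlo, mul_comm]
    exact mul_le_mul_of_nonneg_right (hb n).1 (pow_nonneg hr n)
  · intro h
    refine (h.mul_left hi).of_nonneg_of_le
      (fun n => mul_nonneg (hlo.le.trans (hb n).1) (pow_nonneg hr n)) fun n => ?_
    exact mul_le_mul_of_nonneg_right (hb n).2 (pow_nonneg hr n)

open Real in
theorem setOf_summable_mul_exp_eq_Ioi {b : ℕ → ℝ} {s lo hi : ℝ} (hlo : 0 < lo)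
    (hb : ∀ n : ℕ, lo ≤ b n * exp (-((n : ℝ) + 1) * s) ∧ b n * exp (-((n : ℝ) + 1) * s) ≤ hi) :
    {σ : ℝ | Summable fun n : ℕ => b n * exp (-((n : ℝ) + 1) * σ)} = Set.Ioi s := by
  ext σ
  have hsplit : ∀ n : ℕ, b n * exp (-((n : ℝ) + 1) * σ) =
      b n * exp (-((n : ℝ) + 1) * s) * exp (s - σ) ^ n * exp (s - σ) := by
    intro n
    rw [← exp_nat_mul, mul_assoc, mul_assoc, ← exp_add, ← exp_add]
    ring_nf
  simp only [Set.mem_ofPred_eq, Set.mem_Ioi, hsplit]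
  rw [summable_mul_right_iff (exp_pos _).ne', summable_mul_pow_iff_of_bounds hlo hb
    (exp_pos _).le, exp_lt_one_iff, sub_neg]

section WeightedCount

variable {m : Bool → ℕ} {c : Bool} {n : ℕ}

theorem ncard_runBoundedFrom_mul_pow_eq_sum (hc : 1 ≤ m c) (hn : m c ≤ n) (x : ℝ) :
    (runBoundedFrom m c n).ncard * x ^ n =
      ∑ a ∈ Icc 1 (m c), x ^ a * ((runBoundedFrom m (!c) (n - a)).ncard * x ^ (n - a)) := by
  rw [ncard_runBoundedFrom_of_ne_zero (by omega), min_eq_left hn, Nat.cast_sum, sum_mul]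
  refine sum_congr rfl fun a ha => ?_
  rw [← pow_mul_pow_sub x ((mem_Icc.1 ha).2.trans hn)]
  ring

theorem ncard_runBoundedFrom_mul_pow_eq_sum_two_steps (hm : ∀ b, 1 ≤ m b)
    (hn : m c + m (!c) ≤ n) (x : ℝ) :
    (runBoundedFrom m c n).ncard * x ^ n =
      ∑ p ∈ Icc 1 (m c) ×ˢ Icc 1 (m (!c)),
        x ^ (p.1 + p.2) * ((runBoundedFrom m c (n - (p.1 + p.2))).ncard *
          x ^ (n - (p.1 + p.2))) := by
  rw [ncard_runBoundedFrom_mul_pow_eq_sum (hm c) (by omega), sum_product]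
  refine sum_congr rfl fun a ha => ?_
  have ha := (mem_Icc.1 ha).2
  rw [ncard_runBoundedFrom_mul_pow_eq_sum (hm _) (by omega), mul_sum, Bool.not_not]
  refine sum_congr rfl fun b _ => ?_
  rw [Nat.sub_sub, pow_add]
  ring

theorem exists_bounds_ncard_runBoundedFrom_mul_pow (hm : ∀ b, 1 ≤ m b) {x : ℝ} (hx : 0 < x)
    (hx_sol : (∑ a ∈ Icc 1 (m c), x ^ a) * (∑ b ∈ Icc 1 (m (!c)), x ^ b) = 1) :
    ∃ lo hi : ℝ, 0 < lo ∧ ∀ n,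
      lo ≤ (runBoundedFrom m c n).ncard * x ^ n ∧ (runBoundedFrom m c n).ncard * x ^ n ≤ hi :=
  exists_bounds_of_averaging_recurrence (s := Icc 1 (m c) ×ˢ Icc 1 (m (!c)))
    (fun _ _ => pow_nonneg hx.le _)
    (by rw [← hx_sol, sum_mul_sum, sum_product]; simp only [pow_add])
    (fun p hp => by have := (mem_Icc.1 (mem_product.1 hp).1).1; omega)
    (fun n hn => ncard_runBoundedFrom_mul_pow_eq_sum_two_steps hm hn.le x)
    (fun n => mul_pos (Nat.cast_pos.2 (ncard_runBoundedFrom_pos hm c n)) (pow_pos hx n))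

theorem ncard_runBounded_eq_add (hn : n ≠ 0) :
    {l : List Bool | l.length = n ∧ RunBounded m l}.ncard =
      (runBoundedFrom m true n).ncard + (runBoundedFrom m false n).ncard := by
  have hunion : {l : List Bool | l.length = n ∧ RunBounded m l} =
      runBoundedFrom m true n ∪ runBoundedFrom m false n := by
    ext l
    cases l with
    | nil => simp [runBoundedFrom, Ne.symm hn]
    | cons b l => cases b <;> simp [runBoundedFrom]
  rw [hunion, Set.ncard_union_eq _ runBoundedFrom_finite runBoundedFrom_finite]
  refine Set.disjoint_left.2 fun l hl hl' => ?_
  cases l with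
  | nil => exact hn hl.1.symm
  | cons b l => cases b <;> simp_all [runBoundedFrom]

theorem exists_bounds_ncard_runBounded_mul_pow (hm : ∀ b, 1 ≤ m b) {x : ℝ} (hx : 0 < x)
    (hx_sol : ∀ c, (∑ a ∈ Icc 1 (m c), x ^ a) * (∑ b ∈ Icc 1 (m (!c)), x ^ b) = 1) :
    ∃ lo hi : ℝ, 0 < lo ∧ ∀ n : ℕ,
      lo ≤ {l : List Bool | l.length = n + 1 ∧ RunBounded m l}.ncard * x ^ (n + 1) ∧
      {l : List Bool | l.length = n + 1 ∧ RunBounded m l}.ncard * x ^ (n + 1) ≤ hi := by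
  obtain ⟨lo₁, hi₁, hlo₁, h₁⟩ := exists_bounds_ncard_runBoundedFrom_mul_pow hm hx (hx_sol true)
  obtain ⟨lo₀, hi₀, hlo₀, h₀⟩ := exists_bounds_ncard_runBoundedFrom_mul_pow hm hx (hx_sol false)
  refine ⟨lo₁ + lo₀, hi₁ + hi₀, add_pos hlo₁ hlo₀, fun n => ?_⟩
  rw [ncard_runBounded_eq_add n.succ_ne_zero, Nat.cast_add, add_mul]
  exact ⟨add_le_add (h₁ _).1 (h₀ _).1, add_le_add (h₁ _).2 (h₀ _).2⟩

end WeightedCount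

theorem jk_abscissa_of_convergence_general
    (j k : ℕ) (hj : 1 ≤ j) (hk : 1 ≤ k)
    (N : ℕ → ℕ)
    (hN : ∀ n : ℕ, N n = {s : List Bool | s.length = n ∧
      ¬ (List.replicate (j + 1) true) <:+: s ∧
      ¬ (List.replicate (k + 1) false) <:+: s}.ncard)
    (s : ℝ)
    (hs_sol : (∑ a ∈ Finset.Icc 1 j, Real.exp (-(a : ℝ) * s)) *
        (∑ b ∈ Finset.Icc 1 k, Real.exp (-(b : ℝ) * s)) = 1) :
    sInf {σ : ℝ |
        Summable fun n : ℕ => (N (n + 1) : ℝ) * Real.exp (-((n : ℝ) + 1) * σ)}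
      = s := by
  set m : Bool → ℕ := fun b => cond b j k
  have hm : ∀ b, 1 ≤ m b := Bool.forall_bool.2 ⟨hk, hj⟩
  have hN' : ∀ n, N n = {l : List Bool | l.length = n ∧ RunBounded m l}.ncard := fun n => by
    simp only [hN, RunBounded, Bool.forall_bool, m, cond_true, cond_false, and_comm]
  have hpow : ∀ n : ℕ, Real.exp (-s) ^ n = Real.exp (-(n : ℝ) * s) := fun n => by
    rw [← Real.exp_nat_mul, mul_neg, neg_mul]
  have hx_sol : ∀ c, (∑ a ∈ Icc 1 (m c), Real.exp (-s) ^ a) *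
      (∑ b ∈ Icc 1 (m (!c)), Real.exp (-s) ^ b) = 1 := by
    simp only [Bool.forall_bool, hpow]
    exact ⟨by rw [mul_comm]; exact hs_sol, hs_sol⟩
  obtain ⟨lo, hi, hlo, hbounds⟩ :=
    exists_bounds_ncard_runBounded_mul_pow hm (Real.exp_pos (-s)) hx_sol
  rw [setOf_summable_mul_exp_eq_Ioi hlo (hi := hi) fun n => ?_, csInf_Ioi]
  simpa only [hN', hpow, Nat.cast_add, Nat.cast_one] using hbounds n

/-- **Abscissa of convergence of the `(j,k)` generating function.** For
`j, k ≥ 1` with `j·k > 1`, let `N n` be the number of binary strings of length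
`n` with no run of more than `j` consecutive `1`s and no run of more than `k`
consecutive `0`s. Then
`inf {σ ∈ ℝ : ∑_{n ≥ 1} N n · e^{-n·σ} converges}` equals the unique positive
real solution `s*` of `(∑_{a=1}^{j} e^{-a·s}) · (∑_{b=1}^{k} e^{-b·s}) = 1`. -/
theorem jk_abscissa_of_convergence
    (j k : ℕ) (hj : 1 ≤ j) (hk : 1 ≤ k) (hjk : 1 < j * k)
    (N : ℕ → ℕ)
    (hN : ∀ n : ℕ, N n = {s : List Bool | s.length = n ∧
      ¬ (List.replicate (j + 1) true) <:+: s ∧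
      ¬ (List.replicate (k + 1) false) <:+: s}.ncard)
    (s : ℝ) (hs_pos : 0 < s)
    (hs_sol : (∑ a ∈ Finset.Icc 1 j, Real.exp (-(a : ℝ) * s)) *
        (∑ b ∈ Finset.Icc 1 k, Real.exp (-(b : ℝ) * s)) = 1) :
    sInf {σ : ℝ |
        Summable fun n : ℕ => (N (n + 1) : ℝ) * Real.exp (-((n : ℝ) + 1) * σ)}
      = s :=
  jk_abscissa_of_convergence_general j k hj hk N hN s hs_sol
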